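/- arXiv:2305.18268 — 2 statements merged into one kernel-verified Lean document; each statement's English description precedes it below -/
import Mathlib

section
/- If P is an irreducible transition matrix on a finite state space reversible with respect to π, then for any f ∈ L²₀(π), v(f,P) = ⟨f, (I+P)(I−P)^{-1} f⟩, where (I−P)^{-1} denotes the inverse of I−P restricted to L²₀(π). -/
open Matrix BigOperators Filter

def IsStochastic {n : ℕ} (P : Matrix (Fin n) (Fin n) ℝ) : Prop :=
  (∀ x y, 0 ≤ P x y) ∧ ∀ x, ∑ y, P x y = 1

def IsReversible {n : ℕ} (π : Fin n → ℝ) (P : Matrix (Fin n) (Fin n) ℝ) : Prop :=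
  ∀ x y, π x * P x y = π y * P y x

def MatIrreducible {n : ℕ} (P : Matrix (Fin n) (Fin n) ℝ) : Prop :=
  ∀ x y, ∃ k : ℕ, 0 < (P ^ k) x y

noncomputable def pInner {n : ℕ} (π f g : Fin n → ℝ) : ℝ := ∑ x, f x * g x * π x

noncomputable def autocov {n : ℕ} (π : Fin n → ℝ) (P : Matrix (Fin n) (Fin n) ℝ)
    (f : Fin n → ℝ) (k : ℕ) : ℝ :=
  ∑ x, ∑ y, π x * (f x - ∑ z, π z * f z) * (P ^ k) x y * (f y - ∑ z, π z * f z)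

noncomputable def varN {n : ℕ} (π : Fin n → ℝ) (P : Matrix (Fin n) (Fin n) ℝ)
    (f : Fin n → ℝ) (N : ℕ) : ℝ :=
  ((N : ℝ))⁻¹ * ∑ i ∈ Finset.range N, ∑ j ∈ Finset.range N,
    autocov π P f (max i j - min i j)

def HasAsymptVar {n : ℕ} (π : Fin n → ℝ) (P : Matrix (Fin n) (Fin n) ℝ)
    (f : Fin n → ℝ) (v : ℝ) : Prop :=
  Tendsto (varN π P f) atTop (nhds v)

def EffDom {n : ℕ} (π : Fin n → ℝ) (P Q : Matrix (Fin n) (Fin n) ℝ) : Prop :=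
  ∀ (f : Fin n → ℝ) (vP vQ : ℝ),
    HasAsymptVar π P f vP → HasAsymptVar π Q f vQ → vP ≤ vQ

/-!
Since `f = (I - P) g`, the autocovariances telescope: `⟨f, Pᵏ f⟩ = A k - A (k + 1)` with
`A m = ⟨f, Pᵐ g⟩`, and reversibility (self-adjointness of `P` in `L²(π)`) gives
`A m = B m - B (m + 1)` with `B m = ⟨g, Pᵐ g⟩`. The double sum over `i, j < N` then collapses to
`N (A 0 + A 1) - 2 (B 1 - B (N + 1))`. The powers of `P` are stochastic, so `B` is bounded, and
after dividing by `N` the limit is `A 0 + A 1 = ⟨f, g + P g⟩`.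
-/

open Finset

section Telescoping

variable {R : Type*} [CommRing R]

theorem sum_range_dist_eq_of_telescoping (γ A : ℕ → R) (hγ : ∀ k, γ k = A k - A (k + 1))
    {N i : ℕ} (hi : i < N) :
    ∑ j ∈ range N, γ (max i j - min i j) = A 0 + A 1 - A (i + 1) - A (N - i) := by
  have below : ∑ j ∈ range (i + 1), γ (max i j - min i j) = A 0 - A (i + 1) := by
    calc ∑ j ∈ range (i + 1), γ (max i j - min i j)
        = ∑ j ∈ range (i + 1), γ (i + 1 - 1 - j) :=
          sum_congr rfl fun j hj => by
            rw [max_eq_left (Nat.lt_succ_iff.1 (mem_range.1 hj)),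
              min_eq_right (Nat.lt_succ_iff.1 (mem_range.1 hj)), Nat.add_sub_cancel]
      _ = ∑ k ∈ range (i + 1), (A k - A (k + 1)) := by
          rw [sum_range_reflect γ (i + 1)]; exact sum_congr rfl fun k _ => hγ k
      _ = A 0 - A (i + 1) := sum_range_sub' A _
  have above : ∑ j ∈ Ico (i + 1) N, γ (max i j - min i j) = A 1 - A (N - i) := by
    calc ∑ j ∈ Ico (i + 1) N, γ (max i j - min i j)
        = ∑ t ∈ range (N - (i + 1)), (A (t + 1) - A (t + 1 + 1)) := by
          rw [sum_Ico_eq_sum_range]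
          refine sum_congr rfl fun t _ => ?_
          rw [max_eq_right (by omega), min_eq_left (by omega), hγ]
          congr 2 <;> omega
      _ = A 1 - A (N - i) := by
          rw [sum_range_sub' (fun k => A (k + 1)), show N - (i + 1) + 1 = N - i by omega]
  rw [range_eq_Ico, ← sum_Ico_consecutive _ (Nat.zero_le (i + 1)) hi, ← range_eq_Ico, below,
    above]
  ring

theorem sum_range_sum_range_dist_eq_of_telescoping (γ A B : ℕ → R)
    (hγ : ∀ k, γ k = A k - A (k + 1)) (hA : ∀ m, A m = B m - B (m + 1)) (N : ℕ) :
    ∑ i ∈ range N, ∑ j ∈ range N, γ (max i j - min i j)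
      = N * (A 0 + A 1) - 2 * (B 1 - B (N + 1)) := by
  have htel : ∑ i ∈ range N, A (i + 1) = B 1 - B (N + 1) := by
    rw [sum_congr rfl fun i _ => hA (i + 1), sum_range_sub' (fun k => B (k + 1))]
  have hrefl : ∑ i ∈ range N, A (N - i) = ∑ i ∈ range N, A (i + 1) := by
    rw [← sum_range_reflect (fun i => A (i + 1)) N]
    exact sum_congr rfl fun i hi => by rw [mem_range] at hi; congr 1; omega
  rw [sum_congr rfl fun i hi => sum_range_dist_eq_of_telescoping γ A hγ (mem_range.1 hi),
    sum_sub_distrib, sum_sub_distrib, sum_const, card_range, nsmul_eq_mul, hrefl, htel]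
  ring

end Telescoping

theorem tendsto_inv_mul_sum_sum_dist_of_telescoping (γ A B : ℕ → ℝ)
    (hγ : ∀ k, γ k = A k - A (k + 1)) (hA : ∀ m, A m = B m - B (m + 1)) {C : ℝ}
    (hB : ∀ m, |B m| ≤ C) :
    Tendsto (fun N : ℕ => (N : ℝ)⁻¹ * ∑ i ∈ range N, ∑ j ∈ range N, γ (max i j - min i j))
      atTop (nhds (A 0 + A 1)) := by
  have hbdd : ∀ N : ℕ, |2 * (B 1 - B (N + 1))| ≤ 4 * C := fun N => by
    rw [abs_mul, abs_two]
    linarith [abs_sub (B 1) (B (N + 1)), hB 1, hB (N + 1)]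
  have hvanish : Tendsto (fun N : ℕ => 2 * (B 1 - B (N + 1)) / N) atTop (nhds 0) :=
    squeeze_zero_norm (fun N => by
        rw [Real.norm_eq_abs, abs_div, Nat.abs_cast]
        exact div_le_div_of_nonneg_right (hbdd N) N.cast_nonneg)
      (tendsto_const_div_atTop_nhds_zero_nat (4 * C))
  simpa using (tendsto_const_nhds (x := A 0 + A 1)).sub hvanish |>.congr' <| by
    filter_upwards [eventually_ne_atTop 0] with N hN
    rw [sum_range_sum_range_dist_eq_of_telescoping γ A B hγ hA N]
    field_simp

theorem norm_mulVec_le_of_mem_rowStochastic {ι : Type*} [Fintype ι] [DecidableEq ι]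
    {M : Matrix ι ι ℝ} (hM : M ∈ rowStochastic ℝ ι) (v : ι → ℝ) : ‖M *ᵥ v‖ ≤ ‖v‖ := by
  refine (pi_norm_le_iff_of_nonneg (norm_nonneg v)).2 fun i => ?_
  calc ‖(M *ᵥ v) i‖ ≤ ∑ j, M i j * ‖v‖ := by
        refine (norm_sum_le _ _).trans (sum_le_sum fun j _ => ?_)
        rw [norm_mul, Real.norm_of_nonneg (nonneg_of_mem_rowStochastic hM)]
        exact mul_le_mul_of_nonneg_left (norm_le_pi_norm v j) (nonneg_of_mem_rowStochastic hM)
    _ = ‖v‖ := by rw [← sum_mul, sum_row_of_mem_rowStochastic hM, one_mul]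

theorem IsStochastic.mem_rowStochastic {n : ℕ} {P : Matrix (Fin n) (Fin n) ℝ}
    (hP : IsStochastic P) : P ∈ rowStochastic ℝ (Fin n) :=
  mem_rowStochastic_iff_sum.2 hP

section pInner

variable {n : ℕ} (π : Fin n → ℝ)

theorem pInner_sub_left (u v w : Fin n → ℝ) :
    pInner π (u - v) w = pInner π u w - pInner π v w := by
  simp only [pInner, ← sum_sub_distrib, Pi.sub_apply, sub_mul]

theorem pInner_add_right (u v w : Fin n → ℝ) :
    pInner π u (v + w) = pInner π u v + pInner π u w := by
  simp only [pInner, ← sum_add_distrib, Pi.add_apply, mul_add, add_mul]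

theorem pInner_sub_right (u v w : Fin n → ℝ) :
    pInner π u (v - w) = pInner π u v - pInner π u w := by
  simp only [pInner, ← sum_sub_distrib, Pi.sub_apply, mul_sub, sub_mul]

theorem abs_pInner_le (u v : Fin n → ℝ) : |pInner π u v| ≤ (∑ x, |u x * π x|) * ‖v‖ := by
  rw [pInner, sum_mul]
  refine (abs_sum_le_sum_abs _ _).trans (sum_le_sum fun x _ => ?_)
  rw [mul_right_comm, abs_mul]
  exact mul_le_mul_of_nonneg_left (norm_le_pi_norm v x) (abs_nonneg _)

theorem IsReversible.pInner_mulVec {P : Matrix (Fin n) (Fin n) ℝ} (hrev : IsReversible π P)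
    (u v : Fin n → ℝ) : pInner π (P *ᵥ u) v = pInner π u (P *ᵥ v) := by
  simp only [pInner, mulVec, dotProduct, sum_mul, mul_sum]
  rw [sum_comm]
  refine sum_congr rfl fun x _ => sum_congr rfl fun y _ => ?_
  linear_combination -(u x * v y) * hrev x y

theorem autocov_eq_pInner (P : Matrix (Fin n) (Fin n) ℝ) {f : Fin n → ℝ}
    (hmean : ∑ x, π x * f x = 0) (k : ℕ) : autocov π P f k = pInner π f ((P ^ k) *ᵥ f) := by
  simp only [autocov, pInner, hmean, sub_zero, mulVec, dotProduct, mul_sum, sum_mul]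
  exact sum_congr rfl fun x _ => sum_congr rfl fun y _ => by ring

end pInner

theorem stmt4_general {n : ℕ} (π : Fin n → ℝ) (P : Matrix (Fin n) (Fin n) ℝ)
    (hP : IsStochastic P) (hrev : IsReversible π P)
    (f g : Fin n → ℝ) (hmeanf : ∑ x, π x * f x = 0)
    (hg : ((1 : Matrix (Fin n) (Fin n) ℝ) - P).mulVec g = f) :
    HasAsymptVar π P f (pInner π f (g + P.mulVec g)) := by
  set A : ℕ → ℝ := fun m => pInner π f ((P ^ m) *ᵥ g)
  set B : ℕ → ℝ := fun m => pInner π g ((P ^ m) *ᵥ g)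
  have hf : f = g - P *ᵥ g := by rw [← hg, sub_mulVec, one_mulVec]
  have hγ : ∀ k, autocov π P f k = A k - A (k + 1) := fun k => by
    rw [autocov_eq_pInner π P hmeanf, hf, mulVec_sub, mulVec_mulVec, ← pow_succ,
      pInner_sub_right, ← hf]
  have hA : ∀ m, A m = B m - B (m + 1) := fun m => by
    simp only [A, B, hf, pInner_sub_left, hrev.pInner_mulVec, mulVec_mulVec, ← pow_succ']
  have hB : ∀ m, |B m| ≤ (∑ x, |g x * π x|) * ‖g‖ := fun m =>
    (abs_pInner_le π g _).trans <| mul_le_mul_of_nonneg_left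
      (norm_mulVec_le_of_mem_rowStochastic (pow_mem hP.mem_rowStochastic m) g)
      (sum_nonneg fun x _ => abs_nonneg _)
  have hlimit : pInner π f (g + P *ᵥ g) = A 0 + A 1 := by
    simp only [A, pInner_add_right, pow_zero, one_mulVec, pow_one]
  rw [hlimit]
  exact tendsto_inv_mul_sum_sum_dist_of_telescoping _ A B hγ hA hB

theorem stmt4 {n : ℕ} (π : Fin n → ℝ) (P : Matrix (Fin n) (Fin n) ℝ)
    (hπpos : ∀ x, 0 < π x) (hπsum : ∑ x, π x = 1)
    (hP : IsStochastic P) (hirr : MatIrreducible P) (hrev : IsReversible π P)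
    (f g : Fin n → ℝ) (hmeanf : ∑ x, π x * f x = 0) (hmeang : ∑ x, π x * g x = 0)
    (hg : ((1 : Matrix (Fin n) (Fin n) ℝ) - P).mulVec g = f) :
    HasAsymptVar π P f (pInner π f (g + P.mulVec g)) :=
  stmt4_general π P hP hrev f g hmeanf hg
end

section
/- For irreducible transition matrices P and Q reversible with respect to π on a finite state space, P efficiency-dominates Q if and only if the matrix Q−P has all eigenvalues non-negative. -/
/-!
Conjugating by `D^{1/2}`, `D = diag π`, turns the `π`-inner product into the dot product and a
`π`-reversible kernel `P` into a symmetric matrix `A_P`. Put `L_P = 1 - A_P` and let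
`g = D^{1/2} (f - E_π f)`. Expanding the autocovariances `⟪g, A_P^k g⟫` in an eigenbasis of `A_P`,
whose eigenvalues lie in `[-1, 1]`, the Cesàro means converge to
`v(f, P) = 2 ⟪g, L_P⁻¹ g⟫ - ‖g‖²`; the eigenvalue `1` does not contribute, since by irreducibility
its eigenspace is spanned by `√π ⊥ g`. By the Dirichlet principle
`⟪g, L⁻¹ g⟫ = max_y (2 ⟪g, y⟫ - ⟪y, L y⟫)`, so `L_P ≥ L_Q` gives `v(f, P) ≤ v(f, Q)` for all `f`;
conversely, if `⟪w, (L_P - L_Q) w⟫ < 0`, then `g = L_Q w` has `⟪g, L_Q⁻¹ g⟫ = ⟪w, L_Q w⟫` but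
`⟪g, L_P⁻¹ g⟫ > ⟪w, L_Q w⟫`. Finally `L_P - L_Q = A_Q - A_P` is similar to `Q - P`, so it is
positive semidefinite exactly when `Q - P` has no negative eigenvalue.
-/

open Matrix BigOperators Filter

open Finset Topology

lemma two_mul_mul_sub_mul_sq_le_sq_div {b c β : ℝ} (hβ : 0 ≤ β) (hb : β = 0 → b = 0) :
    2 * b * c - β * c ^ 2 ≤ b ^ 2 / β := by
  rcases hβ.eq_or_lt with rfl | hβ
  · simp [hb rfl]
  · rw [le_div_iff₀ hβ]
    nlinarith [sq_nonneg (b - β * c)]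

lemma two_mul_mul_div_sub_mul_div_sq {b β : ℝ} (hb : β = 0 → b = 0) :
    2 * b * (b / β) - β * (b / β) ^ 2 = b ^ 2 / β := by
  rcases eq_or_ne β 0 with hβ | hβ
  · simp [hb hβ]
  · field_simp
    ring

namespace Matrix

variable {ι : Type*} [Fintype ι]

/-- For `L ≥ 0`, the maximum over `y` is `⟪g, L⁻¹ g⟫` (Dirichlet principle). -/
def dirichletFunctional (L : Matrix ι ι ℝ) (g y : ι → ℝ) : ℝ :=
  2 * (g ⬝ᵥ y) - y ⬝ᵥ (L *ᵥ y)

lemma IsHermitian.dotProduct_mulVec_comm {A : Matrix ι ι ℝ} (hA : A.IsHermitian) (x y : ι → ℝ) :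
    x ⬝ᵥ (A *ᵥ y) = y ⬝ᵥ (A *ᵥ x) := by
  have hT : Aᵀ = A := (conjTranspose_eq_transpose_of_trivial A).symm.trans hA
  rw [dotProduct_mulVec, dotProduct_comm, ← vecMul_transpose, hT]

lemma of_pow_apply_pos [DecidableEq ι] {M : Matrix ι ι ℝ} (hM : ∀ x y, 0 ≤ M x y)
    {p : ι → Prop} (hp : ∀ x y, p x → 0 < M x y → p y) {k : ℕ} {x y : ι}
    (hx : p x) (hk : 0 < (M ^ k) x y) : p y := by
  induction k generalizing x with
  | zero =>
    rcases eq_or_ne x y with rfl | hxy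
    · exact hx
    · simp [one_apply_ne hxy] at hk
  | succ k ih =>
    rw [pow_succ', mul_apply] at hk
    obtain ⟨z, -, hz⟩ := exists_lt_of_sum_lt (f := fun _ => (0 : ℝ))
      (g := fun z => M x z * (M ^ k) z y) (by rwa [sum_const_zero])
    have hxz : 0 < M x z := (hM x z).lt_of_ne fun h => by simp [← h] at hz
    exact ih (hp x z hx hxz) (pos_of_mul_pos_right hz (hM x z))

lemma dirichletFunctional_le_of_posSemidef_sub {L L' : Matrix ι ι ℝ} (h : (L - L').PosSemidef)
    (g y : ι → ℝ) : dirichletFunctional L g y ≤ dirichletFunctional L' g y := by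
  have hy := h.dotProduct_mulVec_nonneg y
  rw [star_trivial, sub_mulVec, dotProduct_sub] at hy
  unfold dirichletFunctional
  linarith

lemma isGreatest_dirichletFunctional_mulVec {L : Matrix ι ι ℝ} (hL : L.PosSemidef) (w : ι → ℝ) :
    IsGreatest (Set.range (dirichletFunctional L (L *ᵥ w))) (w ⬝ᵥ (L *ᵥ w)) := by
  refine ⟨⟨w, ?_⟩, ?_⟩
  · rw [dirichletFunctional, dotProduct_comm (L *ᵥ w)]
    ring
  · rintro _ ⟨y, rfl⟩
    have hsq := hL.dotProduct_mulVec_nonneg (y - w)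
    have hcomm := hL.isHermitian.dotProduct_mulVec_comm y w
    rw [star_trivial, mulVec_sub, dotProduct_sub, sub_dotProduct, sub_dotProduct] at hsq
    rw [dirichletFunctional, dotProduct_comm (L *ᵥ w)]
    linarith

lemma lt_of_isGreatest_dirichletFunctional {L L' : Matrix ι ι ℝ} {w : ι → ℝ} {S : ℝ}
    (hw : w ⬝ᵥ ((L - L') *ᵥ w) < 0)
    (hS : IsGreatest (Set.range (dirichletFunctional L (L' *ᵥ w))) S) :
    w ⬝ᵥ (L' *ᵥ w) < S := by
  have hJ := hS.2 ⟨w, rfl⟩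
  rw [sub_mulVec, dotProduct_sub] at hw
  rw [dirichletFunctional, dotProduct_comm (L' *ᵥ w)] at hJ
  linarith

namespace IsHermitian

variable [DecidableEq ι] {A : Matrix ι ι ℝ} (hA : A.IsHermitian)

noncomputable def eigenCoord (y : ι → ℝ) : ι → ℝ :=
  star (hA.eigenvectorUnitary : Matrix ι ι ℝ) *ᵥ y

lemma eigenCoord_apply (y : ι → ℝ) (i : ι) :
    hA.eigenCoord y i = ⇑(hA.eigenvectorBasis i) ⬝ᵥ y := by
  simp [eigenCoord, mulVec, dotProduct, Matrix.star_apply]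

lemma eigenCoord_eigenvectorUnitary_mulVec (b : ι → ℝ) :
    hA.eigenCoord ((hA.eigenvectorUnitary : Matrix ι ι ℝ) *ᵥ b) = b := by
  rw [eigenCoord, mulVec_mulVec, Unitary.coe_star_mul_self, one_mulVec]

lemma dotProduct_pow_mulVec (k : ℕ) (x y : ι → ℝ) :
    x ⬝ᵥ (A ^ k *ᵥ y) =
      ∑ i, hA.eigenvalues i ^ k * (hA.eigenCoord x i * hA.eigenCoord y i) := by
  set U : Matrix ι ι ℝ := (hA.eigenvectorUnitary : Matrix ι ι ℝ)
  have hpow : A ^ k = U * diagonal (hA.eigenvalues ^ k) * star U := by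
    conv_lhs => rw [hA.spectral_theorem]
    rw [← map_pow, diagonal_pow, Unitary.conjStarAlgAut_apply]
    rfl
  have hx : x ᵥ* U = hA.eigenCoord x := by
    rw [eigenCoord, star_eq_conjTranspose, conjTranspose_eq_transpose_of_trivial,
      ← vecMul_transpose, transpose_transpose]
  rw [hpow, ← mulVec_mulVec, ← mulVec_mulVec, dotProduct_mulVec, hx, dotProduct]
  refine sum_congr rfl fun i _ => ?_
  rw [mulVec_diagonal, Pi.pow_apply, ← eigenCoord]
  ring

lemma dotProduct_eq_sum_eigenCoord (x y : ι → ℝ) :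
    x ⬝ᵥ y = ∑ i, hA.eigenCoord x i * hA.eigenCoord y i := by
  simpa using hA.dotProduct_pow_mulVec 0 x y

lemma dotProduct_one_sub_mulVec (x y : ι → ℝ) :
    x ⬝ᵥ ((1 - A) *ᵥ y) =
      ∑ i, (1 - hA.eigenvalues i) * (hA.eigenCoord x i * hA.eigenCoord y i) := by
  have h := hA.dotProduct_pow_mulVec 1 x y
  rw [pow_one] at h
  simp only [sub_mulVec, one_mulVec, dotProduct_sub, h, hA.dotProduct_eq_sum_eigenCoord x y,
    pow_one, ← sum_sub_distrib, sub_mul, one_mul]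

lemma posSemidef_one_sub (hle : ∀ i, hA.eigenvalues i ≤ 1) : (1 - A).PosSemidef :=
  .of_dotProduct_mulVec_nonneg (isHermitian_one.sub hA) fun y => by
    rw [star_trivial, hA.dotProduct_one_sub_mulVec]
    exact sum_nonneg fun i _ => mul_nonneg (sub_nonneg.2 (hle i)) (mul_self_nonneg _)

theorem isGreatest_dirichletFunctional_one_sub (hle : ∀ i, hA.eigenvalues i ≤ 1) {g : ι → ℝ}
    (hg : ∀ i, hA.eigenvalues i = 1 → hA.eigenCoord g i = 0) :
    IsGreatest (Set.range (dirichletFunctional (1 - A) g))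
      (∑ i, hA.eigenCoord g i ^ 2 / (1 - hA.eigenvalues i)) := by
  have hJ : ∀ y, dirichletFunctional (1 - A) g y = ∑ i, (2 * hA.eigenCoord g i * hA.eigenCoord y i
      - (1 - hA.eigenvalues i) * hA.eigenCoord y i ^ 2) := fun y => by
    rw [dirichletFunctional, hA.dotProduct_eq_sum_eigenCoord, hA.dotProduct_one_sub_mulVec,
      mul_sum, ← sum_sub_distrib]
    exact sum_congr rfl fun i _ => by ring
  -- the terms with `hA.eigenvalues i = 1` read `0 / 0 = 0`
  have hb : ∀ i, 1 - hA.eigenvalues i = 0 → hA.eigenCoord g i = 0 :=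
    fun i h => hg i (by linarith)
  refine ⟨⟨(hA.eigenvectorUnitary : Matrix ι ι ℝ) *ᵥ
      fun i => hA.eigenCoord g i / (1 - hA.eigenvalues i), ?_⟩, ?_⟩
  · rw [hJ, hA.eigenCoord_eigenvectorUnitary_mulVec]
    exact sum_congr rfl fun i _ => two_mul_mul_div_sub_mul_div_sq (hb i)
  · rintro _ ⟨y, rfl⟩
    rw [hJ]
    exact sum_le_sum fun i _ => two_mul_mul_sub_mul_sq_le_sq_div (sub_nonneg.2 (hle i)) (hb i)

end IsHermitian

end Matrix

lemma sum_pow_dist_mul_one_sub_sq (l : ℝ) (N : ℕ) :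
    (∑ i ∈ range N, ∑ j ∈ range N, l ^ (max i j - min i j)) * (1 - l) ^ 2 =
      N * (1 - l ^ 2) - 2 * l * (1 - l ^ N) := by
  induction N with
  | zero => simp
  | succ N ih =>
    have hrow : ∀ i ∈ range N, l ^ (max i N - min i N) = l ^ (N - 1 - i + 1) := fun i hi => by
      have := mem_range.1 hi
      rw [max_eq_right this.le, min_eq_left this.le]
      congr 1
      omega
    have hcol : ∀ j ∈ range N, l ^ (max N j - min N j) = l ^ (N - 1 - j + 1) := fun j hj => by
      rw [max_comm, min_comm]
      exact hrow j hj
    have hgeom : (∑ i ∈ range N, l ^ (N - 1 - i + 1)) * (1 - l) = l * (1 - l ^ N) := by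
      rw [sum_range_reflect (fun i => l ^ (i + 1)) N]
      simp_rw [pow_succ, ← sum_mul]
      linear_combination (-l) * geom_sum_mul l N
    simp only [sum_range_succ, sum_add_distrib, sum_congr rfl hrow, sum_congr rfl hcol, max_self,
      min_self, Nat.sub_self, pow_zero]
    push_cast
    linear_combination ih + 2 * (1 - l) * hgeom

theorem tendsto_inv_mul_sum_pow_dist {l : ℝ} (h1 : -1 ≤ l) (h2 : l < 1) :
    Tendsto (fun N : ℕ => (N : ℝ)⁻¹ * ∑ i ∈ range N, ∑ j ∈ range N, l ^ (max i j - min i j))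
      atTop (𝓝 (2 / (1 - l) - 1)) := by
  have hl : 1 - l ≠ 0 := sub_ne_zero.2 h2.ne'
  have hbdd : IsBoundedUnder (· ≤ ·) atTop
      (norm ∘ fun N : ℕ => 2 * l * (1 - l ^ N) / (1 - l) ^ 2) := by
    refine isBoundedUnder_of ⟨4 / (1 - l) ^ 2, fun N => ?_⟩
    have hpow : |l ^ N| ≤ 1 := by
      rw [abs_pow]
      exact pow_le_one₀ (abs_nonneg l) (abs_le.2 ⟨h1, h2.le⟩)
    have hnum : |2 * l * (1 - l ^ N)| ≤ 4 := by
      rw [abs_mul, abs_mul, abs_two]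
      have hl1 : |l| ≤ 1 := abs_le.2 ⟨h1, h2.le⟩
      have hsub : |1 - l ^ N| ≤ 2 := (abs_sub _ _).trans (by rw [abs_one]; linarith)
      nlinarith [abs_nonneg l, abs_nonneg (1 - l ^ N)]
    rw [Function.comp_apply, Real.norm_eq_abs, abs_div, abs_of_pos (pow_pos (sub_pos.2 h2) 2)]
    exact div_le_div_of_nonneg_right hnum (sq_nonneg _)
  have hlim :=
    (tendsto_inv_atTop_zero.comp tendsto_natCast_atTop_atTop).zero_mul_isBoundedUnder_le hbdd
  have := (tendsto_const_nhds (x := 2 / (1 - l) - 1)).sub hlim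
  rw [sub_zero] at this
  refine this.congr' ((eventually_ne_atTop 0).mono fun N hN => ?_)
  simp only [Function.comp_apply]
  rw [eq_div_of_mul_eq (pow_ne_zero 2 hl) (sum_pow_dist_mul_one_sub_sq l N)]
  field_simp
  ring

section MarkovChain

variable {n : ℕ}

lemma IsStochastic.abs_le_one_of_mulVec_eq_smul {P : Matrix (Fin n) (Fin n) ℝ}
    (hP : IsStochastic P) {μ : ℝ} {φ : Fin n → ℝ} (hφ : φ ≠ 0) (h : P *ᵥ φ = μ • φ) :
    |μ| ≤ 1 := by
  obtain ⟨x₁, hx₁⟩ := Function.ne_iff.1 hφ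
  have : Nonempty (Fin n) := ⟨x₁⟩
  obtain ⟨x, hx⟩ := Finite.exists_max fun y => |φ y|
  have hpos : 0 < |φ x| := (abs_pos.2 hx₁).trans_le (hx x₁)
  refine le_of_mul_le_mul_right ?_ hpos
  calc |μ| * |φ x| = |∑ y, P x y * φ y| := by
        rw [← abs_mul, ← smul_eq_mul, ← Pi.smul_apply, ← h]
        rfl
    _ ≤ ∑ y, P x y * |φ y| := (abs_sum_le_sum_abs _ _).trans_eq
        (sum_congr rfl fun y _ => by rw [abs_mul, abs_of_nonneg (hP.1 x y)])
    _ ≤ ∑ y, P x y * |φ x| := sum_le_sum fun y _ => mul_le_mul_of_nonneg_left (hx y) (hP.1 x y)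
    _ = 1 * |φ x| := by rw [← sum_mul, hP.2 x]

lemma IsStochastic.eq_of_mulVec_eq_self {P : Matrix (Fin n) (Fin n) ℝ} (hP : IsStochastic P)
    (hirr : MatIrreducible P) {φ : Fin n → ℝ} (h : P *ᵥ φ = φ) (x y : Fin n) : φ x = φ y := by
  have : Nonempty (Fin n) := ⟨x⟩
  obtain ⟨x₀, hx₀⟩ := Finite.exists_max φ
  have hstep : ∀ x y, φ x = φ x₀ → 0 < P x y → φ y = φ x₀ := by
    intro x y hx hxy
    have hsum : ∑ z, P x z * (φ x₀ - φ z) = 0 := by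
      have hφx : ∑ z, P x z * φ z = φ x := congrFun h x
      calc ∑ z, P x z * (φ x₀ - φ z) = (∑ z, P x z) * φ x₀ - ∑ z, P x z * φ z := by
            rw [sum_mul, ← sum_sub_distrib]
            simp_rw [mul_sub]
        _ = 0 := by rw [hP.2 x, hφx, hx, one_mul, sub_self]
    have hterm := (sum_eq_zero_iff_of_nonneg fun z _ =>
      mul_nonneg (hP.1 x z) (sub_nonneg.2 (hx₀ z))).1 hsum y (mem_univ y)
    linarith [(mul_eq_zero.1 hterm).resolve_left hxy.ne']
  have hmax : ∀ y, φ y = φ x₀ := fun y => by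
    obtain ⟨k, hk⟩ := hirr x₀ y
    exact of_pow_apply_pos hP.1 hstep rfl hk
  rw [hmax x, hmax y]

lemma IsReversible.sub {π : Fin n → ℝ} {P Q : Matrix (Fin n) (Fin n) ℝ} (hQ : IsReversible π Q)
    (hP : IsReversible π P) : IsReversible π (Q - P) := fun x y => by
  simp only [Matrix.sub_apply, mul_sub, hQ x y, hP x y]

end MarkovChain

section Symmetrization

variable {n : ℕ}

noncomputable def symmetrize (π : Fin n → ℝ) (M : Matrix (Fin n) (Fin n) ℝ) :
    Matrix (Fin n) (Fin n) ℝ :=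
  diagonal (Real.sqrt ∘ π) * M * diagonal (Real.sqrt ∘ π)⁻¹

/-- `f - E_π f`, in the coordinates in which the `π`-inner product is the dot product. -/
noncomputable def centered (π f : Fin n → ℝ) : Fin n → ℝ :=
  fun x => √(π x) * (f x - ∑ z, π z * f z)

variable {π : Fin n → ℝ} (hπ : ∀ x, 0 < π x)
include hπ

lemma diagonal_sqrt_inv_mul : diagonal (Real.sqrt ∘ π)⁻¹ * diagonal (Real.sqrt ∘ π) = 1 := by
  rw [diagonal_mul_diagonal, ← diagonal_one]
  exact congrArg diagonal (funext fun x => inv_mul_cancel₀ (Real.sqrt_pos.2 (hπ x)).ne')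

lemma diagonal_sqrt_mul_inv : diagonal (Real.sqrt ∘ π) * diagonal (Real.sqrt ∘ π)⁻¹ = 1 := by
  rw [diagonal_mul_diagonal, ← diagonal_one]
  exact congrArg diagonal (funext fun x => mul_inv_cancel₀ (Real.sqrt_pos.2 (hπ x)).ne')

omit hπ in
lemma symmetrize_apply (M : Matrix (Fin n) (Fin n) ℝ) (x y : Fin n) :
    symmetrize π M x y = √(π x) * M x y / √(π y) := by
  simp [symmetrize, diagonal_mul, mul_diagonal, div_eq_mul_inv]

lemma isHermitian_symmetrize {M : Matrix (Fin n) (Fin n) ℝ} (hM : IsReversible π M) :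
    (symmetrize π M).IsHermitian := by
  ext x y
  have hx := Real.mul_self_sqrt (hπ x).le
  have hy := Real.mul_self_sqrt (hπ y).le
  rw [conjTranspose_apply, star_trivial, symmetrize_apply, symmetrize_apply,
    div_eq_div_iff (Real.sqrt_pos.2 (hπ x)).ne' (Real.sqrt_pos.2 (hπ y)).ne']
  linear_combination M y x * hy - M x y * hx + hM y x

omit hπ in
lemma symmetrize_sub (P Q : Matrix (Fin n) (Fin n) ℝ) :
    symmetrize π (Q - P) = symmetrize π Q - symmetrize π P := by
  rw [symmetrize, symmetrize, symmetrize, Matrix.mul_sub, Matrix.sub_mul]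

lemma symmetrize_pow (M : Matrix (Fin n) (Fin n) ℝ) (k : ℕ) :
    symmetrize π M ^ k = symmetrize π (M ^ k) := by
  induction k with
  | zero => rw [pow_zero, pow_zero, symmetrize, Matrix.mul_one, diagonal_sqrt_mul_inv hπ]
  | succ k ih =>
    rw [pow_succ, ih, pow_succ, symmetrize, symmetrize, symmetrize]
    simp only [Matrix.mul_assoc]
    rw [← Matrix.mul_assoc (diagonal _⁻¹), diagonal_sqrt_inv_mul hπ, Matrix.one_mul]

lemma symmetrize_mulVec (M : Matrix (Fin n) (Fin n) ℝ) (v : Fin n → ℝ) :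
    symmetrize π M *ᵥ (diagonal (Real.sqrt ∘ π) *ᵥ v) = diagonal (Real.sqrt ∘ π) *ᵥ (M *ᵥ v) := by
  rw [symmetrize, mulVec_mulVec, Matrix.mul_assoc, diagonal_sqrt_inv_mul hπ, Matrix.mul_one,
    ← mulVec_mulVec]

lemma diagonal_sqrt_mulVec_inv_mulVec (u : Fin n → ℝ) :
    diagonal (Real.sqrt ∘ π) *ᵥ (diagonal (Real.sqrt ∘ π)⁻¹ *ᵥ u) = u := by
  rw [mulVec_mulVec, diagonal_sqrt_mul_inv hπ, one_mulVec]

lemma diagonal_sqrt_inv_mulVec_mulVec (v : Fin n → ℝ) :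
    diagonal (Real.sqrt ∘ π)⁻¹ *ᵥ (diagonal (Real.sqrt ∘ π) *ᵥ v) = v := by
  rw [mulVec_mulVec, diagonal_sqrt_inv_mul hπ, one_mulVec]

lemma exists_symmetrize_mulVec_eq_smul_iff {M : Matrix (Fin n) (Fin n) ℝ} {μ : ℝ} :
    (∃ u ≠ 0, symmetrize π M *ᵥ u = μ • u) ↔ ∃ v ≠ 0, M *ᵥ v = μ • v := by
  have hD := diagonal_sqrt_mulVec_inv_mulVec hπ
  have hD' := diagonal_sqrt_inv_mulVec_mulVec hπ
  constructor
  · rintro ⟨u, hu0, hu⟩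
    refine ⟨diagonal (Real.sqrt ∘ π)⁻¹ *ᵥ u, fun h => hu0 (by rw [← hD u, h, mulVec_zero]), ?_⟩
    rw [← hD' (M *ᵥ _), ← symmetrize_mulVec hπ, hD, hu, mulVec_smul]
  · rintro ⟨v, hv0, hv⟩
    refine ⟨diagonal (Real.sqrt ∘ π) *ᵥ v, fun h => hv0 (by rw [← hD' v, h, mulVec_zero]), ?_⟩
    rw [symmetrize_mulVec hπ, hv, mulVec_smul]

lemma symmetrize_mulVec_sqrt {M : Matrix (Fin n) (Fin n) ℝ} (hM : ∀ x, ∑ y, M x y = 1) :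
    symmetrize π M *ᵥ (Real.sqrt ∘ π) = Real.sqrt ∘ π := by
  have hs : Real.sqrt ∘ π = diagonal (Real.sqrt ∘ π) *ᵥ 1 := funext fun x => by
    rw [mulVec_diagonal, Pi.one_apply, mul_one]
  have h1 : M *ᵥ 1 = 1 := funext fun x => by simp [mulVec, dotProduct, hM x]
  rw [hs, symmetrize_mulVec hπ, h1]

end Symmetrization

section AsymptoticVariance

variable {n : ℕ} {π : Fin n → ℝ} (hπ : ∀ x, 0 < π x)
include hπ

lemma autocov_eq_dotProduct (P : Matrix (Fin n) (Fin n) ℝ) (f : Fin n → ℝ) (k : ℕ) :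
    autocov π P f k = centered π f ⬝ᵥ (symmetrize π P ^ k *ᵥ centered π f) := by
  rw [symmetrize_pow hπ, autocov]
  simp only [dotProduct, mulVec, symmetrize_apply, centered, mul_sum]
  refine sum_congr rfl fun x _ => sum_congr rfl fun y _ => ?_
  field_simp [(Real.sqrt_pos.2 (hπ y)).ne']
  rw [Real.sq_sqrt (hπ x).le]
  ring

lemma sqrt_dotProduct_centered (hπsum : ∑ x, π x = 1) (f : Fin n → ℝ) :
    (Real.sqrt ∘ π) ⬝ᵥ centered π f = 0 := by
  simp only [dotProduct, centered, Function.comp_apply, ← mul_assoc,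
    Real.mul_self_sqrt (hπ _).le, mul_sub, sum_sub_distrib, ← sum_mul, hπsum, one_mul, sub_self]

lemma centered_diagonal_inv_mulVec {g : Fin n → ℝ} (hg : (Real.sqrt ∘ π) ⬝ᵥ g = 0) :
    centered π (diagonal (Real.sqrt ∘ π)⁻¹ *ᵥ g) = g := by
  have hmean : ∑ z, π z * (diagonal (Real.sqrt ∘ π)⁻¹ *ᵥ g) z = 0 := by
    rw [← hg]
    refine sum_congr rfl fun z _ => ?_
    rw [mulVec_diagonal, Pi.inv_apply, Function.comp_apply]
    field_simp [(Real.sqrt_pos.2 (hπ z)).ne']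
    rw [Real.sq_sqrt (hπ z).le]
  funext x
  rw [centered, hmean, sub_zero, mulVec_diagonal, Pi.inv_apply, Function.comp_apply,
    mul_inv_cancel_left₀ (Real.sqrt_pos.2 (hπ x)).ne']

variable {P : Matrix (Fin n) (Fin n) ℝ} (hP : IsStochastic P)
include hP

lemma abs_eigenvalues_symmetrize_le_one (hA : (symmetrize π P).IsHermitian) (i : Fin n) :
    |hA.eigenvalues i| ≤ 1 := by
  obtain ⟨v, hv0, hv⟩ := (exists_symmetrize_mulVec_eq_smul_iff hπ).1
    ⟨_, (WithLp.ofLp_eq_zero 2).ne.2 (hA.eigenvectorBasis.orthonormal.ne_zero i),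
      hA.mulVec_eigenvectorBasis i⟩
  exact hP.abs_le_one_of_mulVec_eq_smul hv0 hv

lemma posSemidef_one_sub_symmetrize (hrev : IsReversible π P) :
    (1 - symmetrize π P).PosSemidef :=
  (isHermitian_symmetrize hπ hrev).posSemidef_one_sub fun i =>
    (abs_le.1 (abs_eigenvalues_symmetrize_le_one hπ hP _ i)).2

/-- The eigenvalue-`1` eigenspace of the symmetrized kernel is spanned by `√π`. -/
lemma eigenCoord_eq_zero_of_eigenvalues_eq_one (hirr : MatIrreducible P)
    (hA : (symmetrize π P).IsHermitian) {g : Fin n → ℝ} (hg : (Real.sqrt ∘ π) ⬝ᵥ g = 0)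
    {i : Fin n} (hi : hA.eigenvalues i = 1) : hA.eigenCoord g i = 0 := by
  have hu := hA.mulVec_eigenvectorBasis i
  rw [hi, one_smul] at hu
  rw [hA.eigenCoord_apply]
  generalize ⇑(hA.eigenvectorBasis i) = u at hu ⊢
  set φ := diagonal (Real.sqrt ∘ π)⁻¹ *ᵥ u
  rw [← diagonal_sqrt_mulVec_inv_mulVec hπ u, symmetrize_mulVec hπ] at hu
  have hφ : P *ᵥ φ = φ := by
    rw [← diagonal_sqrt_inv_mulVec_mulVec hπ (P *ᵥ φ), hu, diagonal_sqrt_inv_mulVec_mulVec hπ]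
  rw [← diagonal_sqrt_mulVec_inv_mulVec hπ u]
  rcases isEmpty_or_nonempty (Fin n) with hn | ⟨⟨x₀⟩⟩
  · simp [dotProduct]
  · have hconst : diagonal (Real.sqrt ∘ π) *ᵥ φ = φ x₀ • Real.sqrt ∘ π := funext fun x => by
      rw [mulVec_diagonal, hP.eq_of_mulVec_eq_self hirr hφ x x₀, mul_comm]
      rfl
    rw [hconst, smul_dotProduct, hg, smul_zero]

omit hP in
lemma varN_eq_sum (hA : (symmetrize π P).IsHermitian) (f : Fin n → ℝ) (N : ℕ) :
    varN π P f N = ∑ i, hA.eigenCoord (centered π f) i ^ 2 *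
      ((N : ℝ)⁻¹ * ∑ j ∈ range N, ∑ k ∈ range N, hA.eigenvalues i ^ (max j k - min j k)) := by
  simp only [varN, autocov_eq_dotProduct hπ, hA.dotProduct_pow_mulVec, mul_sum]
  simp_rw [sum_comm (s := range N) (t := (univ : Finset (Fin n)))]
  exact sum_congr rfl fun i _ => sum_congr rfl fun j _ => sum_congr rfl fun k _ => by ring

lemma tendsto_varN (hπsum : ∑ x, π x = 1) (hirr : MatIrreducible P)
    (hA : (symmetrize π P).IsHermitian) (f : Fin n → ℝ) :
    Tendsto (varN π P f) atTop (𝓝 (∑ i, hA.eigenCoord (centered π f) i ^ 2 *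
      (2 / (1 - hA.eigenvalues i) - 1))) := by
  rw [funext (varN_eq_sum hπ hA f)]
  refine tendsto_finsetSum _ fun i _ => ?_
  by_cases hc : hA.eigenCoord (centered π f) i = 0
  · simp [hc]
  · have hbd := abs_le.1 (abs_eigenvalues_symmetrize_le_one hπ hP hA i)
    have hne : hA.eigenvalues i ≠ 1 := fun h => hc <| eigenCoord_eq_zero_of_eigenvalues_eq_one
      hπ hP hirr hA (sqrt_dotProduct_centered hπ hπsum f) h
    exact (tendsto_inv_mul_sum_pow_dist hbd.1 (hbd.2.lt_of_ne hne)).const_mul _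

theorem exists_isGreatest_hasAsymptVar (hπsum : ∑ x, π x = 1) (hirr : MatIrreducible P)
    (hrev : IsReversible π P) (f : Fin n → ℝ) :
    ∃ S, IsGreatest (Set.range (dirichletFunctional (1 - symmetrize π P) (centered π f))) S ∧
      HasAsymptVar π P f (2 * S - centered π f ⬝ᵥ centered π f) := by
  have hA := isHermitian_symmetrize hπ hrev
  refine ⟨_, hA.isGreatest_dirichletFunctional_one_sub
    (fun i => (abs_le.1 (abs_eigenvalues_symmetrize_le_one hπ hP hA i)).2)
    fun i hi => eigenCoord_eq_zero_of_eigenvalues_eq_one hπ hP hirr hA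
      (sqrt_dotProduct_centered hπ hπsum f) hi, ?_⟩
  unfold HasAsymptVar
  convert tendsto_varN hπ hP hπsum hirr hA f using 2
  rw [hA.dotProduct_eq_sum_eigenCoord, mul_sum, ← sum_sub_distrib]
  exact sum_congr rfl fun i _ => by ring

end AsymptoticVariance

section EfficiencyDominance

variable {n : ℕ} {π : Fin n → ℝ} {P Q : Matrix (Fin n) (Fin n) ℝ} (hπ : ∀ x, 0 < π x)
  (hπsum : ∑ x, π x = 1) (hP : IsStochastic P) (hQ : IsStochastic Q)
  (hirrP : MatIrreducible P) (hirrQ : MatIrreducible Q)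
  (hrevP : IsReversible π P) (hrevQ : IsReversible π Q)
include hπ hπsum hP hQ hirrP hirrQ hrevP hrevQ

theorem effDom_of_posSemidef_symmetrize_sub (h : (symmetrize π Q - symmetrize π P).PosSemidef) :
    EffDom π P Q := by
  intro f vP vQ hvP hvQ
  obtain ⟨SP, hSP, hvarP⟩ := exists_isGreatest_hasAsymptVar hπ hP hπsum hirrP hrevP f
  obtain ⟨SQ, hSQ, hvarQ⟩ := exists_isGreatest_hasAsymptVar hπ hQ hπsum hirrQ hrevQ f
  rw [tendsto_nhds_unique hvP hvarP, tendsto_nhds_unique hvQ hvarQ]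
  obtain ⟨y, rfl⟩ := hSP.1
  rw [← sub_sub_sub_cancel_left _ _ (1 : Matrix (Fin n) (Fin n) ℝ)] at h
  linarith [dirichletFunctional_le_of_posSemidef_sub h (centered π f) y, hSQ.2 ⟨y, rfl⟩]

theorem posSemidef_symmetrize_sub_of_effDom (h : EffDom π P Q) :
    (symmetrize π Q - symmetrize π P).PosSemidef := by
  refine .of_dotProduct_mulVec_nonneg
    ((isHermitian_symmetrize hπ hrevQ).sub (isHermitian_symmetrize hπ hrevP)) fun w => ?_
  by_contra! hw
  rw [star_trivial, ← sub_sub_sub_cancel_left _ _ (1 : Matrix (Fin n) (Fin n) ℝ)] at hw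
  set LQ := 1 - symmetrize π Q
  have hLQ : LQ.PosSemidef := posSemidef_one_sub_symmetrize hπ hQ hrevQ
  have hg : (Real.sqrt ∘ π) ⬝ᵥ (LQ *ᵥ w) = 0 := by
    rw [hLQ.isHermitian.dotProduct_mulVec_comm, sub_mulVec, one_mulVec,
      symmetrize_mulVec_sqrt hπ hQ.2, sub_self, dotProduct_zero]
  set f := diagonal (Real.sqrt ∘ π)⁻¹ *ᵥ (LQ *ᵥ w)
  have hf : centered π f = LQ *ᵥ w := centered_diagonal_inv_mulVec hπ hg
  obtain ⟨SP, hSP, hvarP⟩ := exists_isGreatest_hasAsymptVar hπ hP hπsum hirrP hrevP f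
  obtain ⟨SQ, hSQ, hvarQ⟩ := exists_isGreatest_hasAsymptVar hπ hQ hπsum hirrQ hrevQ f
  rw [hf] at hSP hSQ hvarP hvarQ
  have hSQ' : SQ = w ⬝ᵥ (LQ *ᵥ w) := hSQ.unique (isGreatest_dirichletFunctional_mulVec hLQ w)
  have hlt := lt_of_isGreatest_dirichletFunctional hw hSP
  linarith [h f _ _ hvarP hvarQ]

end EfficiencyDominance

theorem posSemidef_symmetrize_iff {n : ℕ} {π : Fin n → ℝ} (hπ : ∀ x, 0 < π x)
    {M : Matrix (Fin n) (Fin n) ℝ} (hM : (symmetrize π M).IsHermitian) :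
    (symmetrize π M).PosSemidef ↔ ∀ (μ : ℝ) (v : Fin n → ℝ), v ≠ 0 → M *ᵥ v = μ • v → 0 ≤ μ := by
  constructor
  · intro h μ v hv0 hv
    obtain ⟨u, hu0, hu⟩ := (exists_symmetrize_mulVec_eq_smul_iff hπ).2 ⟨v, hv0, hv⟩
    have hquad := h.dotProduct_mulVec_nonneg u
    rw [star_trivial, hu, dotProduct_smul, smul_eq_mul] at hquad
    exact nonneg_of_mul_nonneg_left hquad (by simpa using dotProduct_star_self_pos_iff.2 hu0)
  · intro h
    rw [hM.posSemidef_iff_eigenvalues_nonneg]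
    intro i
    obtain ⟨v, hv0, hv⟩ := (exists_symmetrize_mulVec_eq_smul_iff hπ).1
      ⟨_, (WithLp.ofLp_eq_zero 2).ne.2 (hM.eigenvectorBasis.orthonormal.ne_zero i),
        hM.mulVec_eigenvectorBasis i⟩
    exact h _ v hv0 hv

theorem stmt7 {n : ℕ} (π : Fin n → ℝ) (P Q : Matrix (Fin n) (Fin n) ℝ)
    (hπpos : ∀ x, 0 < π x) (hπsum : ∑ x, π x = 1)
    (hP : IsStochastic P) (hQ : IsStochastic Q)
    (hirrP : MatIrreducible P) (hirrQ : MatIrreducible Q)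
    (hrevP : IsReversible π P) (hrevQ : IsReversible π Q) :
    EffDom π P Q ↔
      ∀ (μ : ℝ) (v : Fin n → ℝ), v ≠ 0 → (Q - P).mulVec v = μ • v → 0 ≤ μ := by
  rw [← posSemidef_symmetrize_iff hπpos (isHermitian_symmetrize hπpos (hrevQ.sub hrevP)),
    symmetrize_sub]
  exact ⟨posSemidef_symmetrize_sub_of_effDom hπpos hπsum hP hQ hirrP hirrQ hrevP hrevQ,
    effDom_of_posSemidef_symmetrize_sub hπpos hπsum hP hQ hirrP hirrQ hrevP hrevQ⟩
end
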